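/- arXiv:1901.02978 — 3 statements merged into one kernel-verified Lean document; each statement's English description precedes it below -/
import Mathlib

section
/- Let ε > 0, let c_q be the largest cost of any item used in an optimal solution of the MEDR problem, and choose k* with 2^{k*−1} < c_q ≤ 2^{k*}. Set a = ε·2^{k*}/(n+1). If ALG is the cost of a solution that is optimal for the instance with all costs (including the BES cost term) rounded down by ⌊·/a⌋ among items of cost at most 2^{k*}, then ALG ≤ OPT + ε·2^{k*} ≤ (1 + 2ε)·OPT, where OPT is the true optimal social cost. -/
/-!
Rounding each of the at most `n + 1` cost terms down to a multiple of `a` loses less than `a`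
per term, so on every solution `a · (rounded cost)` underestimates the true cost by less than
`a (n + 1) = ε 2^{k*}`. Since every item of the optimal solution costs at most `c_q ≤ 2^{k*}`, the
optimal solution competes in the rounded problem, which gives `ALG ≤ OPT + ε 2^{k*}`; and
`ε 2^{k*} = 2ε 2^{k*-1} < 2ε c_q ≤ 2ε OPT`.
-/

open Finset

section MedrCost

variable {ι : Type*} (c s : ι → ℝ) (α γ W a : ℝ)

def medrCost (S : Finset ι) : ℝ :=
  ∑ i ∈ S, c i + α * max (W - γ * ∑ i ∈ S, s i) 0

noncomputable def roundedMedrCost (S : Finset ι) : ℝ :=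
  ∑ i ∈ S, ((⌊c i / a⌋ : ℤ) : ℝ) +
    if γ * ∑ i ∈ S, s i < W then ((⌊α * (W - γ * ∑ i ∈ S, s i) / a⌋ : ℤ) : ℝ) else 0

variable {c s α γ W a}

theorem mul_roundedPenalty_le (hα : 0 ≤ α) (ha : 0 < a) (b : ℝ) :
    a * (if b < W then ((⌊α * (W - b) / a⌋ : ℤ) : ℝ) else 0) ≤ α * max (W - b) 0 := by
  split_ifs with hb
  · have := Int.sub_floor_div_mul_nonneg (α * (W - b)) ha
    nlinarith [le_max_left (W - b) 0]
  · rw [mul_zero]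
    positivity

theorem penalty_le_mul_roundedPenalty_add (ha : 0 < a) (b : ℝ) :
    α * max (W - b) 0 ≤ a * (if b < W then ((⌊α * (W - b) / a⌋ : ℤ) : ℝ) else 0) + a := by
  split_ifs with hb
  · have := Int.sub_floor_div_mul_lt (α * (W - b)) ha
    rw [max_eq_left (by linarith)]
    linarith
  · rw [max_eq_right (by linarith), mul_zero, mul_zero, zero_add]
    exact ha.le

theorem mul_roundedMedrCost_le_medrCost (hα : 0 ≤ α) (ha : 0 < a) (S : Finset ι) :
    a * roundedMedrCost c s α γ W a S ≤ medrCost c s α γ W S := by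
  rw [roundedMedrCost, medrCost, mul_add, mul_sum]
  refine add_le_add (sum_le_sum fun i _ => ?_) (mul_roundedPenalty_le hα ha _)
  linarith [Int.sub_floor_div_mul_nonneg (c i) ha]

theorem medrCost_le_mul_roundedMedrCost_add (ha : 0 < a) (S : Finset ι) :
    medrCost c s α γ W S ≤ a * roundedMedrCost c s α γ W a S + a * (#S + 1) := by
  have hsum : ∑ i ∈ S, c i ≤ ∑ i ∈ S, (a * ((⌊c i / a⌋ : ℤ) : ℝ) + a) :=
    sum_le_sum fun i _ => by linarith [Int.sub_floor_div_mul_lt (c i) ha]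
  rw [sum_add_distrib, sum_const, nsmul_eq_mul, ← mul_sum] at hsum
  have hpen := penalty_le_mul_roundedPenalty_add (α := α) (W := W) ha (γ * ∑ i ∈ S, s i)
  rw [roundedMedrCost, medrCost]
  linarith

theorem medrCost_le_of_roundedMedrCost_le (hα : 0 ≤ α) (ha : 0 < a) {S S' : Finset ι}
    (h : roundedMedrCost c s α γ W a S ≤ roundedMedrCost c s α γ W a S') :
    medrCost c s α γ W S ≤ medrCost c s α γ W S' + a * (#S + 1) := by
  calc medrCost c s α γ W S ≤ a * roundedMedrCost c s α γ W a S + a * (#S + 1) :=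
        medrCost_le_mul_roundedMedrCost_add ha S
    _ ≤ a * roundedMedrCost c s α γ W a S' + a * (#S + 1) := by gcongr
    _ ≤ medrCost c s α γ W S' + a * (#S + 1) := by
        gcongr
        exact mul_roundedMedrCost_le_medrCost hα ha S'

theorem le_medrCost_of_mem (hc : ∀ i, 0 ≤ c i) (hα : 0 ≤ α) {S : Finset ι} {q : ι}
    (hq : q ∈ S) : c q ≤ medrCost c s α γ W S := by
  have := single_le_sum (fun i _ => hc i) hq
  have : 0 ≤ α * max (W - γ * ∑ i ∈ S, s i) 0 := by positivity
  rw [medrCost]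
  linarith

end MedrCost

theorem stmt_6_general (n : ℕ) (s c : Fin n → ℝ) (hc : ∀ i, 0 ≤ c i)
    (α γ W ε : ℝ) (hα : 0 < α) (hε : 0 < ε)
    (cost : Finset (Fin n) → ℝ)
    (hcost : ∀ S, cost S = ∑ i ∈ S, c i + α * max (W - γ * ∑ i ∈ S, s i) 0)
    (Sopt : Finset (Fin n))
    (q : Fin n) (hq : q ∈ Sopt) (hqmax : ∀ i ∈ Sopt, c i ≤ c q)
    (k : ℤ) (hk1 : (2 : ℝ) ^ (k - 1) < c q) (hk2 : c q ≤ (2 : ℝ) ^ k)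
    (a : ℝ) (ha : a = ε * (2 : ℝ) ^ k / (n + 1))
    (rcost : Finset (Fin n) → ℝ)
    (hrcost : ∀ S, rcost S = ∑ i ∈ S, ((⌊c i / a⌋ : ℤ) : ℝ) +
      (if γ * ∑ i ∈ S, s i < W
        then ((⌊α * (W - γ * ∑ i ∈ S, s i) / a⌋ : ℤ) : ℝ) else 0))
    (T : Finset (Fin n)) (hT : T = Finset.univ.filter (fun i => c i ≤ (2 : ℝ) ^ k))
    (Sbar : Finset (Fin n))
    (hSbar : ∀ S ⊆ T, rcost Sbar ≤ rcost S) :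
    cost Sbar ≤ cost Sopt + ε * (2 : ℝ) ^ k ∧
    cost Sopt + ε * (2 : ℝ) ^ k ≤ (1 + 2 * ε) * cost Sopt := by
  obtain rfl : cost = medrCost c s α γ W := funext hcost
  obtain rfl : rcost = roundedMedrCost c s α γ W a := funext hrcost
  have hapos : 0 < a := by rw [ha]; positivity
  have hSoptT : Sopt ⊆ T := fun i hi => by simpa [hT] using (hqmax i hi).trans hk2
  have hslack : a * (#Sbar + 1) ≤ ε * 2 ^ k := by
    have : (#Sbar : ℝ) ≤ n := by
      exact_mod_cast card_le_univ Sbar |>.trans_eq (Fintype.card_fin n)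
    rw [ha, div_mul_eq_mul_div, div_le_iff₀ (by positivity)]
    gcongr
  have hOPT : c q ≤ medrCost c s α γ W Sopt := le_medrCost_of_mem hc hα.le hq
  have hpow : (2 : ℝ) ^ k = 2 * 2 ^ (k - 1) := by
    rw [mul_comm, ← zpow_add_one₀ two_ne_zero, sub_add_cancel]
  refine ⟨(medrCost_le_of_roundedMedrCost_le hα.le hapos (hSbar Sopt hSoptT)).trans
    (by linarith), ?_⟩
  rw [hpow]
  linarith [mul_lt_mul_of_pos_left hk1 hε, mul_le_mul_of_nonneg_left hOPT hε.le]

/-- FPTAS key inequality: at the correct scale `k*` (with `2^{k*-1} < c_q ≤ 2^{k*}` for the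
largest cost `c_q` used in an optimal solution) and rounding parameter `a = ε·2^{k*}/(n+1)`,
the true cost of a solution that is optimal for the rounded instance restricted to items of
cost at most `2^{k*}` satisfies `ALG ≤ OPT + ε·2^{k*} ≤ (1+2ε)·OPT`. -/
theorem stmt_6 (n : ℕ) (s c : Fin n → ℝ) (hs : ∀ i, 0 ≤ s i) (hc : ∀ i, 0 ≤ c i)
    (α γ W ε : ℝ) (hα : 0 < α) (hγ : 0 < γ) (hε : 0 < ε)
    (cost : Finset (Fin n) → ℝ)
    (hcost : ∀ S, cost S = ∑ i ∈ S, c i + α * max (W - γ * ∑ i ∈ S, s i) 0)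
    (Sopt : Finset (Fin n)) (hSopt : ∀ S, cost Sopt ≤ cost S)
    (q : Fin n) (hq : q ∈ Sopt) (hqmax : ∀ i ∈ Sopt, c i ≤ c q)
    (k : ℤ) (hk1 : (2 : ℝ) ^ (k - 1) < c q) (hk2 : c q ≤ (2 : ℝ) ^ k)
    (a : ℝ) (ha : a = ε * (2 : ℝ) ^ k / (n + 1))
    (rcost : Finset (Fin n) → ℝ)
    (hrcost : ∀ S, rcost S = ∑ i ∈ S, ((⌊c i / a⌋ : ℤ) : ℝ) +
      (if γ * ∑ i ∈ S, s i < W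
        then ((⌊α * (W - γ * ∑ i ∈ S, s i) / a⌋ : ℤ) : ℝ) else 0))
    (T : Finset (Fin n)) (hT : T = Finset.univ.filter (fun i => c i ≤ (2 : ℝ) ^ k))
    (Sbar : Finset (Fin n)) (hSbarT : Sbar ⊆ T)
    (hSbar : ∀ S ⊆ T, rcost Sbar ≤ rcost S) :
    cost Sbar ≤ cost Sopt + ε * (2 : ℝ) ^ k ∧
    cost Sopt + ε * (2 : ℝ) ^ k ≤ (1 + 2 * ε) * cost Sopt :=
  stmt_6_general n s c hc α γ W ε hα hε cost hcost Sopt q hq hqmax k hk1 hk2 a ha rcost hrcost T hT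
    Sbar hSbar
end

section
/- Suppose algorithm A selects, among candidate solutions indexed by k = 1,…,K, one minimizing the objective value (the MIN composition). If each candidate algorithm A_k is monotone (a winning bid (s_i,b_i) remains winning under any higher declaration (s'_i,b'_i) with s'_i ≥ s_i and b'_i ≤ b_i) and bitonic with respect to the objective (the objective is nonincreasing in higher declarations when agent i wins under A_k, and nondecreasing in lower declarations when agent i loses under A_k), then the MIN composition is itself monotone and bitonic. -/
/-- Declaration `B'` is higher than `B` at agent `i`: agent `i` reports a weakly larger
size and weakly smaller cost, and all other agents' bids are unchanged. -/
def HigherAt {I : Type*} (B B' : I → ℝ × ℝ) (i : I) : Prop :=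
  (B i).1 ≤ (B' i).1 ∧ (B' i).2 ≤ (B i).2 ∧ ∀ j, j ≠ i → B j = B' j

/-- An allocation rule is monotone: a winner remains a winner under any higher declaration. -/
def MonotoneAlloc {I : Type*} (win : (I → ℝ × ℝ) → I → Prop) : Prop :=
  ∀ B B' i, HigherAt B B' i → win B i → win B' i

/-- An allocation rule is bitonic with respect to an objective `g`: the objective is
nonincreasing in higher declarations when agent `i` wins, and nondecreasing in higher
declarations while agent `i` loses. -/
def BitonicAlloc {I : Type*} (win : (I → ℝ × ℝ) → I → Prop)
    (g : (I → ℝ × ℝ) → ℝ) : Prop :=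
  ∀ B B' i, HigherAt B B' i →
    (win B i → g B' ≤ g B) ∧ (¬ win B' i → g B ≤ g B')

section MinComposition

variable {I κ : Type*} {win : κ → (I → ℝ × ℝ) → I → Prop} {g : κ → (I → ℝ × ℝ) → ℝ}
  {sel : (I → ℝ × ℝ) → κ}

theorem bitonicAlloc_minComposition (hbit : ∀ k, BitonicAlloc (win k) (g k))
    (hselmin : ∀ B k, g (sel B) B ≤ g k B) :
    BitonicAlloc (fun B i => win (sel B) B i) (fun B => g (sel B) B) := by
  intro B B' i hB
  exact ⟨fun hwin => (hselmin B' (sel B)).trans ((hbit (sel B) B B' i hB).1 hwin),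
    fun hlose => (hselmin B (sel B')).trans ((hbit (sel B') B B' i hB).2 hlose)⟩

theorem monotoneAlloc_minComposition [PartialOrder κ] (hmono : ∀ k, MonotoneAlloc (win k))
    (hbit : ∀ k, BitonicAlloc (win k) (g k)) (hselmin : ∀ B k, g (sel B) B ≤ g k B)
    (hseltie : ∀ B k, g k B ≤ g (sel B) B → sel B ≤ k) :
    MonotoneAlloc (fun B i => win (sel B) B i) := by
  intro B B' i hB hwin
  by_contra hlose
  have hwin' : win (sel B) B' i := hmono (sel B) B B' i hB hwin
  have h₁ : g (sel B) B' ≤ g (sel B) B := (hbit (sel B) B B' i hB).1 hwin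
  have h₂ : g (sel B') B ≤ g (sel B') B' := (hbit (sel B') B B' i hB).2 hlose
  have h₃ : g (sel B) B ≤ g (sel B') B := hselmin B (sel B')
  have h₄ : g (sel B') B' ≤ g (sel B) B' := hselmin B' (sel B)
  -- `h₃, h₂, h₄, h₁` close a cycle, so both selections are ties and the tie-break
  -- forces `sel B = sel B'`.
  have hsel : sel B = sel B' :=
    le_antisymm (hseltie B (sel B') (by linarith)) (hseltie B' (sel B) (by linarith))
  exact hlose (hsel ▸ hwin')

end MinComposition

/-- MIN composition: if each of the `K` candidate algorithms is monotone and bitonic with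
respect to its objective, then the rule selecting a candidate of minimum objective value
(ties broken towards the least index) is monotone and bitonic. -/
theorem stmt_7 {I : Type*} (K : ℕ)
    (win : Fin K → (I → ℝ × ℝ) → I → Prop)
    (g : Fin K → (I → ℝ × ℝ) → ℝ)
    (hmono : ∀ k, MonotoneAlloc (win k))
    (hbit : ∀ k, BitonicAlloc (win k) (g k))
    (sel : (I → ℝ × ℝ) → Fin K)
    (hselmin : ∀ B k, g (sel B) B ≤ g k B)
    (hseltie : ∀ B k, g k B ≤ g (sel B) B → sel B ≤ k) :
    MonotoneAlloc (fun B i => win (sel B) B i) ∧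
    BitonicAlloc (fun B i => win (sel B) B i) (fun B => g (sel B) B) :=
  ⟨monotoneAlloc_minComposition hmono hbit hselmin hseltie,
    bitonicAlloc_minComposition hbit hselmin⟩
end

section
/- In the MEDR setting with single-minded agents whose cost for an allocation exceeding their declared size s_i is infinite, an exact allocation rule (each agent is allocated either exactly s_i or nothing) combined with critical payments yields a mechanism in which no agent can strictly benefit by misreporting either its size or its cost: for true type (e_i, c_i) and any report (s_i, b_i), U_i((e_i,c_i), B_{-i}) ≥ U_i((s_i,b_i), B_{-i}). -/
/-!
Monotonicity of the allocation makes the critical value `θ` monotone in the size. A report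
`(s, b)` either loses (utility `0`), over-reports the size (utility `⊥`), or wins with
`s ≤ e` and earns `θ s − c ≤ θ e − c`. Truthful reporting earns `max (θ e − c) 0`: it wins
exactly when `c` is below the critical value `θ e`, up to the tie `c = θ e`, where both
outcomes pay `0`.
-/

section CriticalValue

variable {win : ℝ × ℝ → Prop} {θ : ℝ → ℝ}

theorem le_critical_of_win (hθlose : ∀ s b : ℝ, θ s < b → ¬ win (s, b)) {s b : ℝ}
    (hw : win (s, b)) : b ≤ θ s :=
  not_lt.mp fun h => hθlose s b h hw

theorem critical_le_of_not_win (hθwin : ∀ s b : ℝ, b < θ s → win (s, b)) {s b : ℝ}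
    (hw : ¬ win (s, b)) : θ s ≤ b :=
  not_lt.mp fun h => hw (hθwin s b h)

theorem monotone_critical (hmono : ∀ r r' : ℝ × ℝ, r.1 ≤ r'.1 → r'.2 ≤ r.2 → win r → win r')
    (hθwin : ∀ s b : ℝ, b < θ s → win (s, b)) (hθlose : ∀ s b : ℝ, θ s < b → ¬ win (s, b)) :
    Monotone θ := by
  intro s s' hs
  by_contra! hlt
  obtain ⟨b, hb', hb⟩ := exists_between hlt
  exact hθlose s' b hb' (hmono (s, b) (s', b) hs le_rfl (hθwin s b hb))

end CriticalValue

theorem stmt_19_general (win : ℝ × ℝ → Prop) [DecidablePred win]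
    (hmono : ∀ r r' : ℝ × ℝ, r.1 ≤ r'.1 → r'.2 ≤ r.2 → win r → win r')
    (θ : ℝ → ℝ)
    (hθwin : ∀ s b : ℝ, b < θ s → win (s, b))
    (hθlose : ∀ s b : ℝ, θ s < b → ¬ win (s, b))
    (e c : ℝ)
    (u : ℝ × ℝ → EReal)
    (hu : ∀ r : ℝ × ℝ, u r =
      if win r then (if r.1 ≤ e then ((θ r.1 - c : ℝ) : EReal) else ⊥) else 0) :
    ∀ s b : ℝ, u (s, b) ≤ u (e, c) := by
  have hθ := monotone_critical hmono hθwin hθlose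
  have truthful : 0 ≤ u (e, c) ∧ ((θ e - c : ℝ) : EReal) ≤ u (e, c) := by
    by_cases hw : win (e, c)
    · have hc := le_critical_of_win hθlose hw
      simp only [hu, hw, le_rfl, if_true, and_true]
      exact EReal.coe_nonneg.mpr (sub_nonneg.mpr hc)
    · have hc := critical_le_of_not_win hθwin hw
      simp only [hu, hw, if_false, le_rfl, true_and]
      exact EReal.coe_nonpos.mpr (sub_nonpos.mpr hc)
  intro s b
  by_cases hw : win (s, b)
  · by_cases hs : s ≤ e
    · simp only [hu (s, b), hw, hs, if_true]
      exact (EReal.coe_le_coe_iff.mpr (by linarith [hθ hs])).trans truthful.2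
    · simp [hu (s, b), hw, hs]
  · simpa only [hu (s, b), hw, if_false] using truthful.1

/-- Truthfulness for single-minded agents in two dimensions (Theorem 4 of the paper):
fix the other agents' bids and consider agent `i` with true type `(e, c)`. The (exact)
allocation rule `win (s, b)` is monotone in the order (larger size, smaller cost), and
the payment is the critical value `θ s` in the cost coordinate: bids `b < θ s` win and
bids `b > θ s` lose. An agent over-reporting its size (`s > e`) incurs infinite cost
(utility `⊥`); losers get utility `0`; a winner reporting `s ≤ e` gets `θ s − c`.
Then truthful reporting `(e, c)` dominates every report `(s, b)`. -/
theorem stmt_19 (win : ℝ × ℝ → Prop) [DecidablePred win]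
    (hmono : ∀ r r' : ℝ × ℝ, r.1 ≤ r'.1 → r'.2 ≤ r.2 → win r → win r')
    (θ : ℝ → ℝ)
    (hθwin : ∀ s b : ℝ, b < θ s → win (s, b))
    (hθlose : ∀ s b : ℝ, θ s < b → ¬ win (s, b))
    (e c : ℝ) (he : 0 ≤ e) (hc : 0 ≤ c)
    (u : ℝ × ℝ → EReal)
    (hu : ∀ r : ℝ × ℝ, u r =
      if win r then (if r.1 ≤ e then ((θ r.1 - c : ℝ) : EReal) else ⊥) else 0) :
    ∀ s b : ℝ, u (s, b) ≤ u (e, c) :=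
  stmt_19_general win hmono θ hθwin hθlose e c u hu
end
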